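/- Consider the closed-loop quadrotor angular dynamics f : ℝ⁶ → ℝ⁶ given by ẋ₁ = x₂, ẋ₂ = −1.5·x₄x₆ − 0.5·x₄·sin(x₂)cos(x₄) − x₁ − 2.5·x₂, ẋ₃ = x₄, ẋ₄ = 1.5·x₂x₆ + 0.5·x₂·sin(x₂)cos(x₄) − x₃ − 10·x₄, ẋ₅ = x₆, ẋ₆ = −x₅ − 0.8·x₆, and let V(x) = ∑_{i=1}^{6} xᵢ². Then the Lie derivative satisfies L_f V(x) = −5x₂² − 20x₄² − 1.6x₆² ≤ 0 for all x ∈ ℝ⁶. -/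

import Mathlib

/-- The Lie derivative `L_f V x = ∑ i, (∂V/∂xᵢ)(x) · fᵢ(x)` of `V : ℝⁿ → ℝ`
along the vector field `f : ℝⁿ → ℝⁿ`. -/
noncomputable def lieDeriv {n : ℕ} (V : (Fin n → ℝ) → ℝ)
    (f : (Fin n → ℝ) → (Fin n → ℝ)) (x : Fin n → ℝ) : ℝ :=
  ∑ i, fderiv ℝ V x (Pi.single i 1) * f x i

/-- The closed-loop quadrotor angular dynamics on `ℝ⁶`. -/
noncomputable def quadrotorField (x : Fin 6 → ℝ) : Fin 6 → ℝ :=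
  ![x 1,
    -1.5 * x 3 * x 5 - 0.5 * x 3 * Real.sin (x 1) * Real.cos (x 3)
      - x 0 - 2.5 * x 1,
    x 3,
    1.5 * x 1 * x 5 + 0.5 * x 1 * Real.sin (x 1) * Real.cos (x 3)
      - x 2 - 10 * x 3,
    x 5,
    -x 4 - 0.8 * x 5]

/-! For `V = ‖x‖²` the Lie derivative is `2 ⟪x, f x⟫`. In that pairing the gyroscopic terms
`∓1.5 x₄x₆`, `±1.5 x₂x₆` and the perturbation terms `∓0.5 x₄ Ω`, `±0.5 x₂ Ω` cancel in pairs, as do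
the cross terms of the three linear oscillators, leaving only the damping `−2.5x₂² − 10x₄² − 0.8x₆²`. -/

theorem hasFDerivAt_sum_sq {ι : Type*} [Fintype ι] (x : ι → ℝ) :
    HasFDerivAt (fun y : ι → ℝ => ∑ i, y i ^ 2)
      (∑ i, (2 * x i) • (ContinuousLinearMap.proj i : (ι → ℝ) →L[ℝ] ℝ)) x := by
  refine HasFDerivAt.fun_sum fun i _ => ?_
  simpa using (hasFDerivAt_apply (𝕜 := ℝ) i x).pow 2

theorem fderiv_sum_sq_apply {ι : Type*} [Fintype ι] (x v : ι → ℝ) :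
    fderiv ℝ (fun y : ι → ℝ => ∑ i, y i ^ 2) x v = ∑ i, 2 * x i * v i := by
  simp [(hasFDerivAt_sum_sq x).fderiv]

theorem lieDeriv_sum_sq {n : ℕ} (f : (Fin n → ℝ) → (Fin n → ℝ)) (x : Fin n → ℝ) :
    lieDeriv (fun y => ∑ i, y i ^ 2) f x = 2 * ∑ i, x i * f x i := by
  simp only [lieDeriv, fderiv_sum_sq_apply, Pi.single_apply, mul_ite, mul_one, mul_zero,
    Finset.sum_ite_eq', Finset.mem_univ, if_true, Finset.mul_sum]
  exact Finset.sum_congr rfl fun i _ => by ring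

theorem sum_mul_quadrotorField (x : Fin 6 → ℝ) :
    ∑ i, x i * quadrotorField x i = -2.5 * x 1 ^ 2 - 10 * x 3 ^ 2 - 0.8 * x 5 ^ 2 := by
  simp only [Fin.sum_univ_six, quadrotorField, Fin.isValue, Matrix.cons_val_zero,
    Matrix.cons_val_one, Matrix.cons_val]
  ring

/-- For `V(x) = ∑ xᵢ²` along the closed-loop quadrotor angular dynamics:
`L_f V = −5x₂² − 20x₄² − 1.6x₆² ≤ 0` for all `x ∈ ℝ⁶`. -/
theorem quadrotor_lie_derivative :
    ∀ x : Fin 6 → ℝ,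
      lieDeriv (fun y => ∑ i, (y i) ^ 2) quadrotorField x
        = -5 * (x 1) ^ 2 - 20 * (x 3) ^ 2 - 1.6 * (x 5) ^ 2 ∧
      lieDeriv (fun y => ∑ i, (y i) ^ 2) quadrotorField x ≤ 0 := by
  intro x
  have hV : lieDeriv (fun y => ∑ i, (y i) ^ 2) quadrotorField x
      = -5 * (x 1) ^ 2 - 20 * (x 3) ^ 2 - 1.6 * (x 5) ^ 2 := by
    rw [lieDeriv_sum_sq, sum_mul_quadrotorField]
    ring
  refine ⟨hV, ?_⟩
  rw [hV]
  nlinarith [sq_nonneg (x 1), sq_nonneg (x 3), sq_nonneg (x 5)]
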